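/- Let G=(V,E) be a polytree and let i,j∈V be any two vertices such that a 2-trek between i and j exists. Then every 2×2 minor of the trek-matrix A_{i,j} belongs to the third-order moment ideal I^{≤3}(G). -/

import Mathlib

/-!
In a polytree whose vertices are topologically ordered, `(I - Λ)⁻¹` is the matrix of path
weights: its `(a, i)` entry `λ(a → i)` is the product of the edge weights along the unique
directed path from `a` to `i`, or `0` if there is none. Every common ancestor of `i` and `k`
is an ancestor of `v = top(i,k)`, so `s_{ik} = s_{vv} λ(v → i) λ(v → k)`, and likewise
`t_{ilm} = t_{vvv} λ(v → i) λ(v → l) λ(v → m)` for `v = top(i,l,m)`. If the tops of the two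
treks indexing a column of `A_{i,j}` coincide, that common top is an ancestor of `i` and `j`,
hence of `w = top(i,j)`; so every column of `A_{i,j}` is a multiple of `(λ(w → i), λ(w → j))`
and all `2 × 2` minors vanish on the model.
-/

open MvPolynomial Matrix Finset

namespace LNG

variable {n : ℕ}

/-- A directed path in the directed graph `E`, recorded as the (nonempty) list of
visited vertices. -/
def IsDiPath (E : Fin n → Fin n → Prop) : List (Fin n) → Prop
  | [] => False
  | [_] => True
  | a :: b :: l => E a b ∧ IsDiPath E (b :: l)

/-- `p` is a directed path from `v` to `i` (possibly of length zero). -/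
def IsPathFromTo (E : Fin n → Fin n → Prop) (v : Fin n) (p : List (Fin n)) (i : Fin n) : Prop :=
  IsDiPath E p ∧ p.head? = some v ∧ p.getLast? = some i

/-- A `k`-trek with top `v` between the vertices `i 0, …, i (k-1)`: an ordered collection
of directed paths with common source `v`, where the `r`-th path has sink `i r`. -/
def IsTrek (E : Fin n → Fin n → Prop) {k : ℕ} (v : Fin n)
    (P : Fin k → List (Fin n)) (i : Fin k → Fin n) : Prop :=
  ∀ r, IsPathFromTo E v (P r) (i r)

/-- A simple `k`-trek: the top is the only vertex lying on all `k` paths. -/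
def IsSimpleTrek (E : Fin n → Fin n → Prop) {k : ℕ} (v : Fin n)
    (P : Fin k → List (Fin n)) (i : Fin k → Fin n) : Prop :=
  IsTrek E v P i ∧ ∀ w : Fin n, (∀ r, w ∈ P r) → w = v

/-- A 2-trek with top `v` between `i` and `j`. -/
def IsTrek2 (E : Fin n → Fin n → Prop) (v : Fin n) (p q : List (Fin n)) (i j : Fin n) : Prop :=
  IsPathFromTo E v p i ∧ IsPathFromTo E v q j

def IsSimpleTrek2 (E : Fin n → Fin n → Prop) (v : Fin n) (p q : List (Fin n))
    (i j : Fin n) : Prop :=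
  IsTrek2 E v p q i j ∧ ∀ w : Fin n, w ∈ p → w ∈ q → w = v

/-- A 3-trek with top `v` between `i`, `j` and `k`. -/
def IsTrek3 (E : Fin n → Fin n → Prop) (v : Fin n) (p q r : List (Fin n))
    (i j k : Fin n) : Prop :=
  IsPathFromTo E v p i ∧ IsPathFromTo E v q j ∧ IsPathFromTo E v r k

def IsSimpleTrek3 (E : Fin n → Fin n → Prop) (v : Fin n) (p q r : List (Fin n))
    (i j k : Fin n) : Prop :=
  IsTrek3 E v p q r i j k ∧ ∀ w : Fin n, w ∈ p → w ∈ q → w ∈ r → w = v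

def Trek2Exists (E : Fin n → Fin n → Prop) (i j : Fin n) : Prop :=
  ∃ v p q, IsTrek2 E v p q i j

def Trek3Exists (E : Fin n → Fin n → Prop) (i j k : Fin n) : Prop :=
  ∃ v p q r, IsTrek3 E v p q r i j k

/-- The underlying undirected (simple) graph of the directed graph `E`. -/
def underlying (E : Fin n → Fin n → Prop) : SimpleGraph (Fin n) where
  Adj a b := a ≠ b ∧ (E a b ∨ E b a)
  symm := ⟨fun a b h => ⟨h.1.symm, h.2.symm⟩⟩
  loopless := ⟨fun a h => h.1 rfl⟩

/-- A polytree: a topologically ordered DAG whose underlying undirected graph is a tree. -/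
def IsPolytree (E : Fin n → Fin n → Prop) : Prop :=
  (∀ i j : Fin n, E i j → i < j) ∧ (underlying E).IsTree

/-! ### Variables of the moment polynomial ring -/

abbrev SIdx (n : ℕ) := {p : Fin n × Fin n // p.1 ≤ p.2}
abbrev TIdx (n : ℕ) := {p : Fin n × Fin n × Fin n // p.1 ≤ p.2.1 ∧ p.2.1 ≤ p.2.2}

/-- Variables `s_{ij}` (`1 ≤ i ≤ j ≤ n`) and `t_{ijk}` (`1 ≤ i ≤ j ≤ k ≤ n`). -/
abbrev MomVar (n : ℕ) := SIdx n ⊕ TIdx n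

/-- Parameter variables `a_i`, `b_i` (`i ∈ V`) and `λ_{ij}`. -/
abbrev PVar (n : ℕ) := (Fin n ⊕ Fin n) ⊕ Fin n × Fin n

/-- Median of three. -/
def mid3 (i j k : Fin n) : Fin n := max (min i j) (min (max i j) k)

lemma min3_le_mid3 (i j k : Fin n) : min i (min j k) ≤ mid3 i j k :=
  le_trans (le_min (min_le_left _ _) (le_trans (min_le_right i (min j k)) (min_le_left j k)))
    (le_max_left _ _)

lemma mid3_le_max3 (i j k : Fin n) : mid3 i j k ≤ max i (max j k) :=
  max_le (le_trans (min_le_left i j) (le_max_left _ _))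
    (le_trans (min_le_right (max i j) k) (le_trans (le_max_right j k) (le_max_right i _)))

/-- The variable `s_{ij}` (indices sorted). -/
noncomputable def svar (i j : Fin n) : MvPolynomial (MomVar n) ℝ :=
  X (Sum.inl ⟨(min i j, max i j), min_le_max⟩)

/-- The variable `t_{ijk}` (indices sorted). -/
noncomputable def tvar (i j k : Fin n) : MvPolynomial (MomVar n) ℝ :=
  X (Sum.inr ⟨(min i (min j k), mid3 i j k, max i (max j k)),
      min3_le_mid3 i j k, mid3_le_max3 i j k⟩)

/-- Evaluation of the moment variables at a concrete pair `(S, T)`. -/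
def evalVar (S : Matrix (Fin n) (Fin n) ℝ) (T : Fin n → Fin n → Fin n → ℝ) :
    MomVar n → ℝ
  | Sum.inl p => S p.1.1 p.1.2
  | Sum.inr p => T p.1.1 p.1.2.1 p.1.2.2

/-! ### The third-order moment model -/

/-- `Λ ∈ ℝ^E`. -/
def Supported (E : Fin n → Fin n → Prop) (Λ : Matrix (Fin n) (Fin n) ℝ) : Prop :=
  ∀ i j, ¬ E i j → Λ i j = 0

/-- Covariance matrix `(I-Λ)^{-T} Ω⁽²⁾ (I-Λ)^{-1}`. -/
noncomputable def momentS (Λ : Matrix (Fin n) (Fin n) ℝ) (ω2 : Fin n → ℝ) :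
    Matrix (Fin n) (Fin n) ℝ :=
  ((1 - Λ)⁻¹)ᵀ * Matrix.diagonal ω2 * (1 - Λ)⁻¹

/-- Third moment tensor `Ω⁽³⁾ ∙ (I-Λ)^{-1} ∙ (I-Λ)^{-1} ∙ (I-Λ)^{-1}`. -/
noncomputable def momentT (Λ : Matrix (Fin n) (Fin n) ℝ) (ω3 : Fin n → ℝ)
    (i j k : Fin n) : ℝ :=
  ∑ a, ω3 a * (1 - Λ)⁻¹ a i * (1 - Λ)⁻¹ a j * (1 - Λ)⁻¹ a k

/-- Membership in the third-order moment model `M^{≤3}(G)`. -/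
def MomentModel (E : Fin n → Fin n → Prop)
    (S : Matrix (Fin n) (Fin n) ℝ) (T : Fin n → Fin n → Fin n → ℝ) : Prop :=
  ∃ (Λ : Matrix (Fin n) (Fin n) ℝ) (ω2 ω3 : Fin n → ℝ),
    Supported E Λ ∧ (∀ i, 0 < ω2 i) ∧ S = momentS Λ ω2 ∧ T = momentT Λ ω3

/-- The third-order moment (vanishing) ideal `I^{≤3}(G)`. -/
noncomputable def momentIdeal (E : Fin n → Fin n → Prop) : Ideal (MvPolynomial (MomVar n) ℝ) where
  carrier := {f | ∀ S T, MomentModel E S T → eval (evalVar S T) f = 0}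
  add_mem' := by
    intro f g hf hg S T h
    simp [map_add, hf S T h, hg S T h]
  zero_mem' := by
    intro S T h
    simp
  smul_mem' := by
    intro c f hf S T h
    simp [smul_eq_mul, _root_.map_mul, hf S T h]

/-- A fully symmetric 3-tensor. -/
def SymTensor3 (T : Fin n → Fin n → Fin n → ℝ) : Prop :=
  ∀ i j k : Fin n, T i j k = T j i k ∧ T i j k = T i k j

/-! ### Trek matrices and their minors -/

/-- `top(i,k) = top(j,k)`: there is a common vertex `v` that is the top of the
simple 2-treks between `i,k` and between `j,k`. -/
def SameTop2 (E : Fin n → Fin n → Prop) (i j k : Fin n) : Prop :=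
  ∃ v, (∃ p q, IsSimpleTrek2 E v p q i k) ∧ (∃ p q, IsSimpleTrek2 E v p q j k)

/-- `top(i,l,m) = top(j,l,m)`. -/
def SameTop3 (E : Fin n → Fin n → Prop) (i j l m : Fin n) : Prop :=
  ∃ v, (∃ p q r, IsSimpleTrek3 E v p q r i l m) ∧ (∃ p q r, IsSimpleTrek3 E v p q r j l m)

/-- `f` is a `2 × 2` minor of the trek-matrix `A_{i,j}`. -/
def IsTrekMinorOf (E : Fin n → Fin n → Prop) (i j : Fin n)
    (f : MvPolynomial (MomVar n) ℝ) : Prop :=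
  (∃ k k', SameTop2 E i j k ∧ SameTop2 E i j k' ∧
      f = svar i k * svar j k' - svar j k * svar i k') ∨
  (∃ k l m, SameTop2 E i j k ∧ SameTop3 E i j l m ∧
      f = svar i k * tvar j l m - svar j k * tvar i l m) ∨
  (∃ l m l' m', SameTop3 E i j l m ∧ SameTop3 E i j l' m' ∧
      f = tvar i l m * tvar j l' m' - tvar j l m * tvar i l' m')

/-- Variables `s_{ij}` with no 2-trek between `i,j` and `t_{ijk}` with no 3-trek. -/
def noTrekVars (E : Fin n → Fin n → Prop) : Set (MvPolynomial (MomVar n) ℝ) :=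
  {f | (∃ i j, ¬ Trek2Exists E i j ∧ f = svar i j) ∨
       (∃ i j k, ¬ Trek3Exists E i j k ∧ f = tvar i j k)}

/-- The 2-minors of the trek-matrices `A_{i,j}` over edges `i → j` of `G`. -/
def edgeMinors (E : Fin n → Fin n → Prop) : Set (MvPolynomial (MomVar n) ℝ) :=
  {f | ∃ i j, E i j ∧ IsTrekMinorOf E i j f}

/-- The 2-minors of all trek-matrices `A_{i,j}`. -/
def allMinors (E : Fin n → Fin n → Prop) : Set (MvPolynomial (MomVar n) ℝ) :=
  {f | ∃ i j, Trek2Exists E i j ∧ IsTrekMinorOf E i j f}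

/-! ### The simple trek rule parametrization -/

/-- Product of the edge weights `w` along a path. -/
def pathProd {R : Type*} [CommSemiring R] (w : Fin n → Fin n → R) : List (Fin n) → R
  | [] => 1
  | [_] => 1
  | a :: b :: l => w a b * pathProd w (b :: l)

/-- Sum of a weight over all simple 2-treks between `i` and `j`. -/
noncomputable def trekSum2 {M : Type*} [AddCommMonoid M] (E : Fin n → Fin n → Prop)
    (wt : Fin n → List (Fin n) → List (Fin n) → M) (i j : Fin n) : M :=
  ∑ᶠ τ : {x : Fin n × List (Fin n) × List (Fin n) //
      IsSimpleTrek2 E x.1 x.2.1 x.2.2 i j}, wt τ.1.1 τ.1.2.1 τ.1.2.2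

/-- Sum of a weight over all simple 3-treks between `i`, `j` and `k`. -/
noncomputable def trekSum3 {M : Type*} [AddCommMonoid M] (E : Fin n → Fin n → Prop)
    (wt : Fin n → List (Fin n) → List (Fin n) → List (Fin n) → M) (i j k : Fin n) : M :=
  ∑ᶠ τ : {x : Fin n × List (Fin n) × List (Fin n) × List (Fin n) //
      IsSimpleTrek3 E x.1 x.2.1 x.2.2.1 x.2.2.2 i j k},
    wt τ.1.1 τ.1.2.1 τ.1.2.2.1 τ.1.2.2.2

/-- The `(i,j)` coordinate of the simple trek rule parametrization `φ_G^*` (covariances). -/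
noncomputable def phiS (E : Fin n → Fin n → Prop) (a : Fin n → ℝ)
    (Λ : Matrix (Fin n) (Fin n) ℝ) (i j : Fin n) : ℝ :=
  trekSum2 E (fun v p q => a v * (pathProd (fun x y => Λ x y) p * pathProd (fun x y => Λ x y) q)) i j

/-- The `(i,j,k)` coordinate of the simple trek rule parametrization `φ_G^*` (third moments). -/
noncomputable def phiT (E : Fin n → Fin n → Prop) (b : Fin n → ℝ)
    (Λ : Matrix (Fin n) (Fin n) ℝ) (i j k : Fin n) : ℝ :=
  trekSum3 E (fun v p q r => b v * (pathProd (fun x y => Λ x y) p *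
    pathProd (fun x y => Λ x y) q * pathProd (fun x y => Λ x y) r)) i j k

/-- The ring homomorphism `φ_G` of the simple trek rule. -/
noncomputable def phiG (E : Fin n → Fin n → Prop) :
    MvPolynomial (MomVar n) ℝ →ₐ[ℝ] MvPolynomial (PVar n) ℝ :=
  aeval fun v => match v with
    | Sum.inl p => trekSum2 E (fun v' pl ql =>
        X (Sum.inl (Sum.inl v')) * (pathProd (fun x y => X (Sum.inr (x, y))) pl *
          pathProd (fun x y => X (Sum.inr (x, y))) ql)) p.1.1 p.1.2
    | Sum.inr p => trekSum3 E (fun v' pl ql rl =>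
        X (Sum.inl (Sum.inr v')) * (pathProd (fun x y => X (Sum.inr (x, y))) pl *
          pathProd (fun x y => X (Sum.inr (x, y))) ql *
          pathProd (fun x y => X (Sum.inr (x, y))) rl)) p.1.1 p.1.2.1 p.1.2.2

section Paths

variable {E : Fin n → Fin n → Prop}

lemma isDiPath_iff : ∀ {l : List (Fin n)}, IsDiPath E l ↔ l ≠ [] ∧ l.IsChain E
  | [] => by simp [IsDiPath]
  | [_] => by simp [IsDiPath]
  | _ :: _ :: _ => by simp [IsDiPath, isDiPath_iff]

lemma isPathFromTo_iff {v i : Fin n} {p : List (Fin n)} :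
    IsPathFromTo E v p i ↔ p.IsChain E ∧ p.head? = some v ∧ p.getLast? = some i := by
  rw [IsPathFromTo, isDiPath_iff]
  constructor
  · rintro ⟨⟨-, h⟩, hv, hi⟩
    exact ⟨h, hv, hi⟩
  · rintro ⟨h, hv, hi⟩
    exact ⟨⟨by rintro rfl; simp at hv, h⟩, hv, hi⟩

lemma isPathFromTo_cons_cons_iff {v a b i : Fin n} {t : List (Fin n)} :
    IsPathFromTo E v (a :: b :: t) i ↔ v = a ∧ E a b ∧ IsPathFromTo E b (b :: t) i := by
  simp only [IsPathFromTo, IsDiPath, List.head?_cons, List.getLast?_cons_cons,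
    Option.some.injEq]
  tauto

def Reaches (E : Fin n → Fin n → Prop) (a i : Fin n) : Prop :=
  ∃ p, IsPathFromTo E a p i

namespace IsPathFromTo

variable {a v i w : Fin n} {p q : List (Fin n)}

lemma singleton (v : Fin n) : IsPathFromTo E v [v] v :=
  ⟨trivial, rfl, rfl⟩

lemma exists_eq_cons (h : IsPathFromTo E v p i) : ∃ t, p = v :: t :=
  List.head?_eq_some_iff.1 h.2.1

lemma head_mem (h : IsPathFromTo E v p i) : v ∈ p :=
  List.mem_of_head? h.2.1

lemma last_mem (h : IsPathFromTo E v p i) : i ∈ p :=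
  List.mem_of_getLast? h.2.2

lemma reaches (h : IsPathFromTo E v p i) : Reaches E v i :=
  ⟨p, h⟩

lemma split (h : IsPathFromTo E v p i) (hw : w ∈ p) :
    ∃ p₁ p₂, IsPathFromTo E v p₁ w ∧ IsPathFromTo E w p₂ i ∧ p = p₁ ++ p₂.tail := by
  obtain ⟨c, hv, hi⟩ := isPathFromTo_iff.1 h
  obtain ⟨s, t, rfl⟩ := List.append_of_mem hw
  refine ⟨s ++ [w], w :: t, isPathFromTo_iff.2 ⟨c.prefix ⟨t, by simp⟩, ?_, by simp⟩,
    isPathFromTo_iff.2 ⟨c.suffix ⟨s, rfl⟩, rfl, ?_⟩, by simp⟩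
  · cases s <;> simpa using hv
  · rwa [← List.getLast?_append_cons]

lemma append (h₁ : IsPathFromTo E a p v) (h₂ : IsPathFromTo E v q i) :
    IsPathFromTo E a (p ++ q.tail) i := by
  obtain ⟨c₁, ha, hv⟩ := isPathFromTo_iff.1 h₁
  obtain ⟨c₂, -, hi⟩ := isPathFromTo_iff.1 h₂
  obtain ⟨t, rfl⟩ := h₂.exists_eq_cons
  obtain ⟨s, rfl⟩ := h₁.exists_eq_cons
  cases t with
  | nil => simp_all
  | cons b t =>
    refine isPathFromTo_iff.2 ⟨List.isChain_append.2 ⟨c₁, c₂.tail, ?_⟩, by simp, ?_⟩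
    · intro x hx y hy
      simp only [hv, Option.mem_def, Option.some.injEq, List.tail_cons, List.head?_cons] at hx hy
      exact hx ▸ hy ▸ (List.isChain_cons_cons.1 c₂).1
    · rwa [List.tail_cons, List.getLast?_append_cons, ← List.getLast?_cons_cons]

lemma subset_append_tail (h₁ : IsPathFromTo E a p v) (h₂ : IsPathFromTo E v q i) :
    q ⊆ p ++ q.tail := by
  obtain ⟨t, rfl⟩ := h₂.exists_eq_cons
  intro x hx
  rcases List.mem_cons.1 hx with rfl | hx
  · exact List.mem_append_left _ h₁.last_mem
  · exact List.mem_append_right _ hx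

lemma cons (hab : E a v) (h : IsPathFromTo E v p i) : IsPathFromTo E a (a :: p) i := by
  obtain ⟨t, rfl⟩ := h.exists_eq_cons
  simpa using (show IsPathFromTo E a [a, v] v from
    isPathFromTo_iff.2 ⟨List.isChain_pair.2 hab, rfl, rfl⟩).append h

lemma reaches_of_mem (h : IsPathFromTo E v p i) (hw : w ∈ p) : Reaches E v w :=
  let ⟨_, _, h₁, _⟩ := h.split hw; h₁.reaches

end IsPathFromTo

lemma pathProd_append {R : Type*} [CommSemiring R] (w : Fin n → Fin n → R) {v : Fin n} :
    ∀ {p q : List (Fin n)}, p.getLast? = some v → q.head? = some v →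
      pathProd w (p ++ q.tail) = pathProd w p * pathProd w q
  | [], _, hp, _ => by simp at hp
  | [_], _ :: _, hp, hq => by simp_all [pathProd]
  | _ :: _ :: _, q, hp, hq => by
    rw [List.getLast?_cons_cons] at hp
    rw [List.cons_append, List.cons_append, pathProd, ← List.cons_append,
      pathProd_append w hp hq, pathProd, mul_assoc]

end Paths

section Ordered

variable {E : Fin n → Fin n → Prop}

namespace IsPathFromTo

variable {a v i w : Fin n} {p q : List (Fin n)}

lemma pairwise_lt (hlt : ∀ i j, E i j → i < j) (h : IsPathFromTo E v p i) :
    p.Pairwise (· < ·) :=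
  List.isChain_iff_pairwise.1 ((isPathFromTo_iff.1 h).1.imp fun _ _ => hlt _ _)

lemma nodup (hlt : ∀ i j, E i j → i < j) (h : IsPathFromTo E v p i) : p.Nodup :=
  (h.pairwise_lt hlt).imp ne_of_lt

lemma le_of_mem (hlt : ∀ i j, E i j → i < j) (h : IsPathFromTo E v p i) (hw : w ∈ p) :
    v ≤ w := by
  obtain ⟨t, rfl⟩ := h.exists_eq_cons
  rcases List.mem_cons.1 hw with rfl | hw
  · exact le_rfl
  · exact (List.rel_of_pairwise_cons (h.pairwise_lt hlt) hw).le

lemma exists_walk (hlt : ∀ i j, E i j → i < j) :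
    ∀ {v : Fin n} {p : List (Fin n)}, IsPathFromTo E v p i → ∃ q : (underlying E).Walk v i, q.support = p
  | _, [], h => absurd h.head_mem List.not_mem_nil
  | _, [_], h => by
    obtain ⟨-, hv, hi⟩ := h
    simp only [List.head?_cons, List.getLast?_singleton, Option.some.injEq] at hv hi
    subst hv hi
    exact ⟨.nil, rfl⟩
  | _, _ :: _ :: _, h => by
    obtain ⟨rfl, hab, h'⟩ := isPathFromTo_cons_cons_iff.1 h
    obtain ⟨q, hq⟩ := exists_walk hlt h'
    have hadj : (underlying E).Adj _ _ := ⟨(hlt _ _ hab).ne, .inl hab⟩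
    exact ⟨.cons hadj q, by simp [hq]⟩

lemma exists_isPath (hlt : ∀ i j, E i j → i < j) (h : IsPathFromTo E v p i) :
    ∃ q : (underlying E).Walk v i, q.IsPath ∧ q.support = p :=
  let ⟨q, hq⟩ := h.exists_walk hlt
  ⟨q, .mk' (hq ▸ h.nodup hlt), hq⟩

end IsPathFromTo

lemma Reaches.le (hlt : ∀ i j, E i j → i < j) {v i : Fin n} (h : Reaches E v i) : v ≤ i :=
  let ⟨_, hp⟩ := h; hp.le_of_mem hlt hp.last_mem

lemma Trek2Exists.exists_isSimpleTrek2 (hlt : ∀ i j, E i j → i < j) {i j : Fin n}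
    (h : Trek2Exists E i j) : ∃ w p q, IsSimpleTrek2 E w p q i j := by
  classical
  obtain ⟨v, p, q, hp, hq⟩ := h
  -- the top of the simple trek is the last common vertex of `p` and `q`
  set C := univ.filter (fun x => x ∈ p ∧ x ∈ q)
  have hC : C.Nonempty := ⟨v, by simp [C, hp.head_mem, hq.head_mem]⟩
  obtain ⟨-, hwp, hwq⟩ := Finset.mem_filter.1 (C.max'_mem hC)
  obtain ⟨p₁, p₂, hp₁, hp₂, rfl⟩ := hp.split hwp
  obtain ⟨q₁, q₂, hq₁, hq₂, rfl⟩ := hq.split hwq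
  refine ⟨_, p₂, q₂, ⟨hp₂, hq₂⟩, fun x hxp hxq => le_antisymm ?_ (hp₂.le_of_mem hlt hxp)⟩
  exact C.le_max' x (Finset.mem_filter.2
    ⟨mem_univ x, hp₁.subset_append_tail hp₂ hxp, hq₁.subset_append_tail hq₂ hxq⟩)

end Ordered

section Polyforest

variable {E : Fin n → Fin n → Prop}

lemma IsPathFromTo.eq (hlt : ∀ i j, E i j → i < j) (hac : (underlying E).IsAcyclic)
    {v i : Fin n} {p q : List (Fin n)} (hp : IsPathFromTo E v p i)
    (hq : IsPathFromTo E v q i) : p = q := by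
  obtain ⟨wp, hwp, rfl⟩ := hp.exists_isPath hlt
  obtain ⟨wq, hwq, rfl⟩ := hq.exists_isPath hlt
  exact congrArg (fun w : (underlying E).Path v i => w.1.support)
    ((hac.subsingleton_path v i).allEq ⟨wp, hwp⟩ ⟨wq, hwq⟩)

/-- The walk `i ← a → k` contains the unique tree path from `i` to `k`, which passes
through `v`. -/
lemma IsSimpleTrek2.reaches_top (hlt : ∀ i j, E i j → i < j) (hac : (underlying E).IsAcyclic)
    {v i k a : Fin n} {p q : List (Fin n)} (hs : IsSimpleTrek2 E v p q i k)
    (hi : Reaches E a i) (hk : Reaches E a k) : Reaches E a v := by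
  obtain ⟨⟨hp, hq⟩, hpq⟩ := hs
  obtain ⟨r, hr⟩ := hi
  obtain ⟨s, hs⟩ := hk
  obtain ⟨wp, hwp, rfl⟩ := hp.exists_isPath hlt
  obtain ⟨wq, hwq, rfl⟩ := hq.exists_isPath hlt
  obtain ⟨wr, -, rfl⟩ := hr.exists_isPath hlt
  obtain ⟨ws, -, rfl⟩ := hs.exists_isPath hlt
  have hpath : (wp.reverse.append wq).IsPath := by
    refine .mk' ?_
    rw [SimpleGraph.Walk.support_append, SimpleGraph.Walk.support_reverse]
    refine (List.nodup_reverse.2 hwp.support_nodup).append hwq.support_nodup.tail ?_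
    intro x hxp hxq
    obtain ⟨t, ht⟩ := hq.exists_eq_cons
    rw [ht, List.tail_cons] at hxq
    have hxv : x = v := hpq x (List.mem_reverse.1 hxp) (ht ▸ List.mem_cons_of_mem v hxq)
    exact (List.nodup_cons.1 (ht ▸ hwq.support_nodup)).1 (hxv ▸ hxq)
  have hbypass : (wr.reverse.append ws).bypass = wp.reverse.append wq :=
    congrArg Subtype.val ((hac.subsingleton_path i k).allEq
      ⟨_, SimpleGraph.Walk.bypass_isPath _⟩ ⟨_, hpath⟩)
  have hv : v ∈ (wr.reverse.append ws).support := by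
    refine SimpleGraph.Walk.support_bypass_subset_support _ ?_
    rw [hbypass]
    simp
  simp only [SimpleGraph.Walk.support_append, SimpleGraph.Walk.support_reverse,
    List.mem_append, List.mem_reverse] at hv
  rcases hv with hv | hv
  · exact hr.reaches_of_mem hv
  · exact hs.reaches_of_mem (List.mem_of_mem_tail hv)

lemma IsPathFromTo.mem_of_mem_of_ne (hlt : ∀ i j, E i j → i < j)
    (hac : (underlying E).IsAcyclic) {v x w i l : Fin n} {t q : List (Fin n)}
    (hp : IsPathFromTo E v (v :: x :: t) i) (hq : IsPathFromTo E v q l)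
    (hwp : w ∈ v :: x :: t) (hwq : w ∈ q) (hwv : w ≠ v) : x ∈ q := by
  obtain ⟨p₁, p₂, hp₁, -, hp⟩ := hp.split hwp
  obtain ⟨q₁, q₂, hq₁, -, hq⟩ := hq.split hwq
  obtain rfl := hp₁.eq hlt hac hq₁
  obtain ⟨_ | ⟨y, s⟩, rfl⟩ := hp₁.exists_eq_cons
  · exact absurd (by simpa using hp₁.2.2 : v = w).symm hwv
  · simp only [List.cons_append, List.cons.injEq] at hp
    rw [hq, hp.2.1]
    simp

/-- If `p` met both `q` and `r` away from `v`, the second vertex of `p` would lie on all three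
paths. -/
lemma IsSimpleTrek3.isSimpleTrek2_or (hlt : ∀ i j, E i j → i < j)
    (hac : (underlying E).IsAcyclic) {v i l m : Fin n} {p q r : List (Fin n)}
    (hs : IsSimpleTrek3 E v p q r i l m) :
    IsSimpleTrek2 E v p q i l ∨ IsSimpleTrek2 E v p r i m ∨ IsSimpleTrek2 E v q r l m := by
  obtain ⟨⟨hp, hq, hr⟩, hpqr⟩ := hs
  by_contra! hcon
  obtain ⟨hpq, hpr, -⟩ := hcon
  simp only [IsSimpleTrek2, IsTrek2, hp, hq, hr, true_and, not_forall, exists_prop] at hpq hpr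
  obtain ⟨w, hwp, hwq, hwv⟩ := hpq
  obtain ⟨w', hw'p, hw'r, hw'v⟩ := hpr
  obtain ⟨_ | ⟨x, t⟩, rfl⟩ := hp.exists_eq_cons
  · exact hwv (by simpa using hwp)
  have hxv : x ≠ v := (hlt _ _ (isPathFromTo_cons_cons_iff.1 hp).2.1).ne'
  exact hxv (hpqr x (by simp) (hp.mem_of_mem_of_ne hlt hac hq hwp hwq hwv)
    (hp.mem_of_mem_of_ne hlt hac hr hw'p hw'r hw'v))

lemma IsSimpleTrek3.reaches_top (hlt : ∀ i j, E i j → i < j) (hac : (underlying E).IsAcyclic)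
    {v i l m a : Fin n} {p q r : List (Fin n)} (hs : IsSimpleTrek3 E v p q r i l m)
    (hi : Reaches E a i) (hl : Reaches E a l) (hm : Reaches E a m) : Reaches E a v := by
  rcases hs.isSimpleTrek2_or hlt hac with h | h | h
  · exact h.reaches_top hlt hac hi hl
  · exact h.reaches_top hlt hac hi hm
  · exact h.reaches_top hlt hac hl hm

end Polyforest

section PathWeight

variable {E : Fin n → Fin n → Prop} {Λ : Matrix (Fin n) (Fin n) ℝ}

open Classical in
/-- The choice of path is immaterial in a polyforest, where paths are unique
(`pathWeight_eq_pathProd`). -/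
noncomputable def pathWeight (E : Fin n → Fin n → Prop) (Λ : Matrix (Fin n) (Fin n) ℝ)
    (a i : Fin n) : ℝ :=
  if h : Reaches E a i then pathProd Λ h.choose else 0

lemma pathWeight_eq_pathProd (hlt : ∀ i j, E i j → i < j) (hac : (underlying E).IsAcyclic)
    {a i : Fin n} {p : List (Fin n)} (h : IsPathFromTo E a p i) :
    pathWeight E Λ a i = pathProd Λ p := by
  have hr : Reaches E a i := h.reaches
  rw [pathWeight, dif_pos hr, hr.choose_spec.eq hlt hac h]

lemma pathWeight_of_not_reaches {a i : Fin n} (h : ¬ Reaches E a i) :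
    pathWeight E Λ a i = 0 :=
  dif_neg h

lemma reaches_of_pathWeight_ne_zero {a i : Fin n} (h : pathWeight E Λ a i ≠ 0) :
    Reaches E a i :=
  not_imp_comm.1 pathWeight_of_not_reaches h

lemma pathWeight_self (hlt : ∀ i j, E i j → i < j) (hac : (underlying E).IsAcyclic)
    (v : Fin n) : pathWeight E Λ v v = 1 :=
  pathWeight_eq_pathProd hlt hac (IsPathFromTo.singleton v)

lemma pathWeight_trans (hlt : ∀ i j, E i j → i < j) (hac : (underlying E).IsAcyclic)
    {a v i : Fin n} (h₁ : Reaches E a v) (h₂ : Reaches E v i) :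
    pathWeight E Λ a i = pathWeight E Λ a v * pathWeight E Λ v i := by
  obtain ⟨p, hp⟩ := h₁
  obtain ⟨q, hq⟩ := h₂
  rw [pathWeight_eq_pathProd hlt hac (hp.append hq), pathWeight_eq_pathProd hlt hac hp,
    pathWeight_eq_pathProd hlt hac hq, pathProd_append Λ hp.2.2 hq.2.1]

lemma reaches_of_mul_pathWeight_ne_zero (hsupp : Supported E Λ) {a b i : Fin n}
    (h : Λ a b * pathWeight E Λ b i ≠ 0) : E a b ∧ Reaches E b i :=
  ⟨by_contra fun hE => h (by rw [hsupp a b hE, zero_mul]),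
    reaches_of_pathWeight_ne_zero (right_ne_zero_of_mul h)⟩

lemma sum_mul_pathWeight_self (hlt : ∀ i j, E i j → i < j) (hsupp : Supported E Λ)
    (a : Fin n) : ∑ b, Λ a b * pathWeight E Λ b a = 0 :=
  Finset.sum_eq_zero fun _ _ => by_contra fun h =>
    let ⟨hE, hr⟩ := reaches_of_mul_pathWeight_ne_zero hsupp h
    (hlt _ _ hE).not_ge (hr.le hlt)

/-- The unique path from `a` to `i ≠ a` leaves `a` through a unique out-neighbour `b`. -/
lemma sum_mul_pathWeight_of_ne (hlt : ∀ i j, E i j → i < j) (hac : (underlying E).IsAcyclic)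
    (hsupp : Supported E Λ) {a i : Fin n} (hai : a ≠ i) :
    ∑ b, Λ a b * pathWeight E Λ b i = pathWeight E Λ a i := by
  by_cases hr : Reaches E a i
  · obtain ⟨p, hp⟩ := hr
    obtain ⟨_ | ⟨b, t⟩, rfl⟩ := hp.exists_eq_cons
    · exact absurd (by simpa using hp.2.2 : a = i) hai
    obtain ⟨-, hab, hbi⟩ := isPathFromTo_cons_cons_iff.1 hp
    rw [Finset.sum_eq_single b, pathWeight_eq_pathProd hlt hac hp,
      pathWeight_eq_pathProd hlt hac hbi]
    · rfl
    · intro c _ hcb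
      by_contra h
      obtain ⟨hE, u, hu⟩ := reaches_of_mul_pathWeight_ne_zero hsupp h
      obtain ⟨t', rfl⟩ := hu.exists_eq_cons
      exact hcb (List.cons.inj (List.cons.inj ((hu.cons hE).eq hlt hac hp)).2).1
    · simp
  · rw [pathWeight_of_not_reaches hr]
    exact Finset.sum_eq_zero fun _ _ => by_contra fun h =>
      let ⟨hE, _, hu⟩ := reaches_of_mul_pathWeight_ne_zero hsupp h
      hr (hu.cons hE).reaches

lemma one_sub_mul_pathWeight (hlt : ∀ i j, E i j → i < j) (hac : (underlying E).IsAcyclic)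
    (hsupp : Supported E Λ) : (1 - Λ) * of (pathWeight E Λ) = 1 := by
  ext a i
  rw [Matrix.sub_mul, Matrix.one_mul, Matrix.sub_apply, mul_apply, of_apply]
  simp only [of_apply]
  rcases eq_or_ne a i with rfl | hai
  · rw [sum_mul_pathWeight_self hlt hsupp, pathWeight_self hlt hac, one_apply_eq, sub_zero]
  · rw [sum_mul_pathWeight_of_ne hlt hac hsupp hai, sub_self, one_apply_ne hai]

lemma inv_one_sub_eq_pathWeight (hlt : ∀ i j, E i j → i < j)
    (hac : (underlying E).IsAcyclic) (hsupp : Supported E Λ) :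
    (1 - Λ)⁻¹ = of (pathWeight E Λ) :=
  inv_eq_right_inv (one_sub_mul_pathWeight hlt hac hsupp)

end PathWeight

section Moments

lemma momentS_isSymm (Λ : Matrix (Fin n) (Fin n) ℝ) (ω : Fin n → ℝ) :
    (momentS Λ ω).IsSymm := by
  simp [Matrix.IsSymm, momentS, Matrix.transpose_mul, Matrix.mul_assoc]

lemma momentT_symm (Λ : Matrix (Fin n) (Fin n) ℝ) (ω : Fin n → ℝ) :
    SymTensor3 (momentT Λ ω) := fun _ _ _ =>
  ⟨Finset.sum_congr rfl fun _ _ => by ring, Finset.sum_congr rfl fun _ _ => by ring⟩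

lemma eval_svar {S : Matrix (Fin n) (Fin n) ℝ} (hS : S.IsSymm)
    (T : Fin n → Fin n → Fin n → ℝ) (i j : Fin n) :
    eval (evalVar S T) (svar i j) = S i j := by
  rcases le_total i j with h | h
  · simp [svar, evalVar, h]
  · simp [svar, evalVar, h, hS.apply]

lemma eval_tvar (S : Matrix (Fin n) (Fin n) ℝ) {T : Fin n → Fin n → Fin n → ℝ}
    (hT : SymTensor3 T) (i j k : Fin n) :
    eval (evalVar S T) (tvar i j k) = T i j k := by
  have h₁ := fun a b c => (hT a b c).1
  have h₂ := fun a b c => (hT a b c).2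
  simp only [tvar, eval_X, evalVar]
  grind [mid3]

variable {E : Fin n → Fin n → Prop} {Λ : Matrix (Fin n) (Fin n) ℝ}

lemma momentS_eq_sum_pathWeight (hlt : ∀ i j, E i j → i < j)
    (hac : (underlying E).IsAcyclic) (hsupp : Supported E Λ) (ω : Fin n → ℝ) (i k : Fin n) :
    momentS Λ ω i k = ∑ a, ω a * pathWeight E Λ a i * pathWeight E Λ a k := by
  rw [momentS, inv_one_sub_eq_pathWeight hlt hac hsupp, mul_apply]
  refine Finset.sum_congr rfl fun a _ => ?_
  rw [mul_diagonal, transpose_apply, of_apply, of_apply]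
  ring

lemma momentT_eq_sum_pathWeight (hlt : ∀ i j, E i j → i < j)
    (hac : (underlying E).IsAcyclic) (hsupp : Supported E Λ) (ω : Fin n → ℝ) (i l m : Fin n) :
    momentT Λ ω i l m =
      ∑ a, ω a * pathWeight E Λ a i * pathWeight E Λ a l * pathWeight E Λ a m := by
  simp only [momentT, inv_one_sub_eq_pathWeight hlt hac hsupp, of_apply]

lemma pathWeight_mul_pathWeight_of_isSimpleTrek2 (hlt : ∀ i j, E i j → i < j)
    (hac : (underlying E).IsAcyclic) {v i k : Fin n} {p q : List (Fin n)}
    (hs : IsSimpleTrek2 E v p q i k) (a : Fin n) :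
    pathWeight E Λ a i * pathWeight E Λ a k =
      pathWeight E Λ a v ^ 2 * (pathWeight E Λ v i * pathWeight E Λ v k) := by
  by_cases hav : Reaches E a v
  · rw [pathWeight_trans hlt hac hav hs.1.1.reaches, pathWeight_trans hlt hac hav hs.1.2.reaches]
    ring
  · have : pathWeight E Λ a i = 0 ∨ pathWeight E Λ a k = 0 := by
      by_contra! h
      exact hav (hs.reaches_top hlt hac (reaches_of_pathWeight_ne_zero h.1)
        (reaches_of_pathWeight_ne_zero h.2))
    rcases this with h | h <;> simp [h, pathWeight_of_not_reaches hav]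

lemma pathWeight_mul_pathWeight_mul_pathWeight_of_isSimpleTrek3 (hlt : ∀ i j, E i j → i < j)
    (hac : (underlying E).IsAcyclic) {v i l m : Fin n} {p q r : List (Fin n)}
    (hs : IsSimpleTrek3 E v p q r i l m) (a : Fin n) :
    pathWeight E Λ a i * pathWeight E Λ a l * pathWeight E Λ a m =
      pathWeight E Λ a v ^ 3 *
        (pathWeight E Λ v i * pathWeight E Λ v l * pathWeight E Λ v m) := by
  by_cases hav : Reaches E a v
  · rw [pathWeight_trans hlt hac hav hs.1.1.reaches, pathWeight_trans hlt hac hav hs.1.2.1.reaches,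
      pathWeight_trans hlt hac hav hs.1.2.2.reaches]
    ring
  · have : pathWeight E Λ a i = 0 ∨ pathWeight E Λ a l = 0 ∨ pathWeight E Λ a m = 0 := by
      by_contra! h
      exact hav (hs.reaches_top hlt hac (reaches_of_pathWeight_ne_zero h.1)
        (reaches_of_pathWeight_ne_zero h.2.1) (reaches_of_pathWeight_ne_zero h.2.2))
    rcases this with h | h | h <;> simp [h, pathWeight_of_not_reaches hav]

lemma momentS_eq_of_isSimpleTrek2 (hlt : ∀ i j, E i j → i < j)
    (hac : (underlying E).IsAcyclic) (hsupp : Supported E Λ) {v i k : Fin n}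
    {p q : List (Fin n)} (hs : IsSimpleTrek2 E v p q i k) (ω : Fin n → ℝ) :
    momentS Λ ω i k = momentS Λ ω v v * (pathWeight E Λ v i * pathWeight E Λ v k) := by
  simp only [momentS_eq_sum_pathWeight hlt hac hsupp, Finset.sum_mul]
  refine Finset.sum_congr rfl fun a _ => ?_
  rw [mul_assoc, pathWeight_mul_pathWeight_of_isSimpleTrek2 hlt hac hs]
  ring

lemma momentT_eq_of_isSimpleTrek3 (hlt : ∀ i j, E i j → i < j)
    (hac : (underlying E).IsAcyclic) (hsupp : Supported E Λ) {v i l m : Fin n}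
    {p q r : List (Fin n)} (hs : IsSimpleTrek3 E v p q r i l m) (ω : Fin n → ℝ) :
    momentT Λ ω i l m = momentT Λ ω v v v *
      (pathWeight E Λ v i * pathWeight E Λ v l * pathWeight E Λ v m) := by
  simp only [momentT_eq_sum_pathWeight hlt hac hsupp, Finset.sum_mul]
  refine Finset.sum_congr rfl fun a _ => ?_
  rw [mul_assoc, mul_assoc, ← mul_assoc (pathWeight E Λ a i),
    pathWeight_mul_pathWeight_mul_pathWeight_of_isSimpleTrek3 hlt hac hs]
  ring

lemma SameTop2.exists_momentS_eq (hlt : ∀ i j, E i j → i < j)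
    (hac : (underlying E).IsAcyclic) (hsupp : Supported E Λ) {w i j k : Fin n}
    {p q : List (Fin n)} (hw : IsSimpleTrek2 E w p q i j) (hk : SameTop2 E i j k)
    (ω : Fin n → ℝ) : ∃ c, momentS Λ ω i k = c * pathWeight E Λ w i ∧
      momentS Λ ω j k = c * pathWeight E Λ w j := by
  obtain ⟨u, ⟨p₁, q₁, hik⟩, ⟨p₂, q₂, hjk⟩⟩ := hk
  have huw : Reaches E u w := hw.reaches_top hlt hac hik.1.1.reaches hjk.1.1.reaches
  refine ⟨momentS Λ ω u u * pathWeight E Λ u w * pathWeight E Λ u k, ?_, ?_⟩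
  · rw [momentS_eq_of_isSimpleTrek2 hlt hac hsupp hik,
      pathWeight_trans hlt hac huw hw.1.1.reaches]
    ring
  · rw [momentS_eq_of_isSimpleTrek2 hlt hac hsupp hjk,
      pathWeight_trans hlt hac huw hw.1.2.reaches]
    ring

lemma SameTop3.exists_momentT_eq (hlt : ∀ i j, E i j → i < j)
    (hac : (underlying E).IsAcyclic) (hsupp : Supported E Λ) {w i j l m : Fin n}
    {p q : List (Fin n)} (hw : IsSimpleTrek2 E w p q i j) (hlm : SameTop3 E i j l m)
    (ω : Fin n → ℝ) : ∃ c, momentT Λ ω i l m = c * pathWeight E Λ w i ∧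
      momentT Λ ω j l m = c * pathWeight E Λ w j := by
  obtain ⟨u, ⟨p₁, q₁, r₁, hilm⟩, ⟨p₂, q₂, r₂, hjlm⟩⟩ := hlm
  have huw : Reaches E u w := hw.reaches_top hlt hac hilm.1.1.reaches hjlm.1.1.reaches
  refine ⟨momentT Λ ω u u u * pathWeight E Λ u w * pathWeight E Λ u l * pathWeight E Λ u m,
    ?_, ?_⟩
  · rw [momentT_eq_of_isSimpleTrek3 hlt hac hsupp hilm,
      pathWeight_trans hlt hac huw hw.1.1.reaches]
    ring
  · rw [momentT_eq_of_isSimpleTrek3 hlt hac hsupp hjlm,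
      pathWeight_trans hlt hac huw hw.1.2.reaches]
    ring

end Moments

lemma mul_sub_mul_eq_zero_of_proportional {R : Type*} [CommRing R] {a b c d x y r s : R}
    (ha : a = r * x) (hb : b = r * y) (hc : c = s * x) (hd : d = s * y) : a * d - b * c = 0 := by
  subst_vars
  ring

/-- For any two vertices `i, j` of a polytree joined by a 2-trek, every
`2 × 2` minor of the trek-matrix `A_{i,j}` lies in `I^{≤3}(G)`. -/
theorem trek_minors_in_ideal (n : ℕ) (E : Fin n → Fin n → Prop) (hG : IsPolytree E)
    (i j : Fin n) (h2 : Trek2Exists E i j) (f : MvPolynomial (MomVar n) ℝ)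
    (hf : IsTrekMinorOf E i j f) : f ∈ momentIdeal E := by
  obtain ⟨hlt, htree⟩ := hG
  have hac := htree.isAcyclic
  obtain ⟨w, p, q, hw⟩ := h2.exists_isSimpleTrek2 hlt
  rintro S T ⟨Λ, ω₂, ω₃, hsupp, -, rfl, rfl⟩
  have hS := eval_svar (momentS_isSymm Λ ω₂) (momentT Λ ω₃)
  have hT := eval_tvar (momentS Λ ω₂) (momentT_symm Λ ω₃)
  rcases hf with ⟨k, k', hk, hk', rfl⟩ | ⟨k, l, m, hk, hlm, rfl⟩ |
    ⟨l, m, l', m', hlm, hlm', rfl⟩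
  · obtain ⟨c, h₁, h₂⟩ := hk.exists_momentS_eq hlt hac hsupp hw ω₂
    obtain ⟨c', h₁', h₂'⟩ := hk'.exists_momentS_eq hlt hac hsupp hw ω₂
    simpa [hS] using mul_sub_mul_eq_zero_of_proportional h₁ h₂ h₁' h₂'
  · obtain ⟨c, h₁, h₂⟩ := hk.exists_momentS_eq hlt hac hsupp hw ω₂
    obtain ⟨c', h₁', h₂'⟩ := hlm.exists_momentT_eq hlt hac hsupp hw ω₃
    simpa [hS, hT] using mul_sub_mul_eq_zero_of_proportional h₁ h₂ h₁' h₂'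
  · obtain ⟨c, h₁, h₂⟩ := hlm.exists_momentT_eq hlt hac hsupp hw ω₃
    obtain ⟨c', h₁', h₂'⟩ := hlm'.exists_momentT_eq hlt hac hsupp hw ω₃
    simpa [hT] using mul_sub_mul_eq_zero_of_proportional h₁ h₂ h₁' h₂'

end LNG
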